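/- Let φ : X_p → X_q be a finitary isomorphism with finite expectation, let M ∈ ℕ and let C ⊆ X_p be a cylinder set obtained by fixing the coordinates on the ball B(M) such that D = C ∩ {x : m_φ(x) ≤ M and a_φ(x) ≤ M} has positive μ_p-measure. Let A ⊆ X_p be a measurable set with the property that there is a μ_p-null set E ⊆ D such that for every x ∈ D ∖ E, every integer n ≥ 0, and every x' ∈ X_p with x'_g = x_g for all g ∉ {a^k : −M−n < k < −M} (or with x'_g = x_g for all g ∉ {a^k : M < k < M+n}), one has x' ∈ A. Then there exists t₀ > 0 such that for every t > t₀: limsup_{n→∞} ( ∫_{A ∩ a^n·A} ∏_{i=0}^{n−1} (P_{x_{a^i}})^{−t} dμ_p(x) )^{1/n} = lim_{n→∞} ( ∫_{X_p} ∏_{i=0}^{n−1} (P_{x_{a^i}})^{−t} dμ_p(x) )^{1/n} = P_1^{1−t} + ⋯ + P_m^{1−t}, where a^n·A = {a^n·x : x ∈ A} and the integrand is exp(t·Σ_{i=0}^{n−1} −log P_{x_{a^i}}), i.e. exp(t·J(𝒜_{p,a}, a^{−n})) in the paper's notation; the common value equals β_{p,a}(1−t). -/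

import Mathlib

open MeasureTheory ProbabilityTheory Filter

namespace Finitary

/-- The free group `F_ℓ` on `ℓ` generators. -/
abbrev FG (ℓ : ℕ) := FreeGroup (Fin ℓ)

instance {ℓ : ℕ} : Countable (FG ℓ) := FreeGroup.toWord_injective.countable

/-- The word length on the free group. -/
noncomputable def wl {ℓ : ℕ} (g : FG ℓ) : ℕ := FreeGroup.norm g

/-- The ball `B(r)` of radius `r` centered at the identity. -/
def ball (ℓ r : ℕ) : Set (FG ℓ) := {g | wl g ≤ r}

/-- `W_a`: the set of reduced words ending in the generator `a`, together with the identity. -/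
def Wa {ℓ : ℕ} (a : Fin ℓ) : Set (FG ℓ) :=
  {g | g = 1 ∨ wl g = wl (g * (FreeGroup.of a)⁻¹) + 1}

/-- The configuration space `X_p = {1,…,m}^{F_ℓ}`. -/
abbrev Conf (ℓ m : ℕ) := FG ℓ → Fin m

/-- The shift action `(g·x)_h = x_{g⁻¹h}`. -/
def shift {ℓ m : ℕ} (g : FG ℓ) (x : Conf ℓ m) : Conf ℓ m := fun h => x (g⁻¹ * h)

/-- `μ` is the Bernoulli product measure on `X_p` with marginal weights `P`:
every cylinder set has measure equal to the product of the weights of its fixed symbols. -/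
def IsBernoulli {ℓ m : ℕ} (P : Fin m → ℝ) (μ : Measure (Conf ℓ m)) : Prop :=
  IsProbabilityMeasure μ ∧
    ∀ (A : Finset (FG ℓ)) (σ : FG ℓ → Fin m),
      (μ {x | ∀ g ∈ A, x g = σ g}).toReal = ∏ g ∈ A, P (σ g)

/-- The set of radii `r` such that the ball `B(r)` determines `φ(x)_e`. -/
def codeSet {ℓ m n : ℕ} (φ : Conf ℓ m → Conf ℓ n) (x : Conf ℓ m) : Set ℕ :=
  {r | ∀ x' : Conf ℓ m, (∀ g ∈ ball ℓ r, x' g = x g) → φ x' 1 = φ x 1}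

/-- `r_φ(x)`: the least radius of a ball determining `φ(x)_e`. -/
noncomputable def rphi {ℓ m n : ℕ} (φ : Conf ℓ m → Conf ℓ n) (x : Conf ℓ m) : ℕ :=
  sInf (codeSet φ x)

/-- `v_φ(x) = |B(r_φ(x))|`. -/
noncomputable def vphi {ℓ m n : ℕ} (φ : Conf ℓ m → Conf ℓ n) (x : Conf ℓ m) : ℕ :=
  (ball ℓ (rphi φ x)).ncard

/-- A finitary coding: a measurable, equivariant, measure-preserving map which is
a.e. finitarily determined at the identity coordinate (i.e. continuous off a null set). -/
structure IsFinitaryCoding {ℓ m n : ℕ} (μp : Measure (Conf ℓ m)) (μq : Measure (Conf ℓ n))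
    (φ : Conf ℓ m → Conf ℓ n) : Prop where
  measurable : Measurable φ
  measurePreserving : MeasurePreserving φ μp μq
  equivariant : ∀ g : FG ℓ, ∀ᵐ x ∂μp, φ (shift g x) = shift g (φ x)
  finitary : ∀ᵐ x ∂μp, (codeSet φ x).Nonempty

/-- A finitary isomorphism: a pair of mutually inverse (mod null sets) finitary codings. -/
structure IsFinitaryIso {ℓ m n : ℕ} (μp : Measure (Conf ℓ m)) (μq : Measure (Conf ℓ n))
    (φ : Conf ℓ m → Conf ℓ n) (ψ : Conf ℓ n → Conf ℓ m) : Prop where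
  toCoding : IsFinitaryCoding μp μq φ
  invCoding : IsFinitaryCoding μq μp ψ
  leftInv : ∀ᵐ x ∂μp, ψ (φ x) = x
  rightInv : ∀ᵐ y ∂μq, φ (ψ y) = y

/-- Finite expectation of code volume: `∫ v_φ dμ_p < ∞` and `∫ v_{φ⁻¹} dμ_q < ∞`. -/
def FiniteExpectation {ℓ m n : ℕ} (μp : Measure (Conf ℓ m)) (μq : Measure (Conf ℓ n))
    (φ : Conf ℓ m → Conf ℓ n) (ψ : Conf ℓ n → Conf ℓ m) : Prop :=
  (∫⁻ x, (vphi φ x : ENNReal) ∂μp) < ⊤ ∧ (∫⁻ y, (vphi ψ y : ENNReal) ∂μq) < ⊤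

/-- The sub-σ-algebra generated by the coordinate maps `x ↦ x_g`, `g ∈ S`. -/
def coordAlg {ℓ m : ℕ} (S : Set (FG ℓ)) : MeasurableSpace (Conf ℓ m) :=
  MeasurableSpace.comap (fun x => S.restrict x) inferInstance

/-- The past algebra `𝒜_{p,a}`, generated by the coordinates in `W_a`. -/
def pastAlg {ℓ m : ℕ} (a : Fin ℓ) : MeasurableSpace (Conf ℓ m) := coordAlg (Wa a)

/-- The atom of `x` for the σ-algebra generated by the coordinates in `S`. -/
def atomOn {ℓ m : ℕ} (S : Set (FG ℓ)) (x : Conf ℓ m) : Set (Conf ℓ m) :=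
  {y | ∀ g ∈ S, y g = x g}

/-- The regular conditional probability `μ^𝒞(s | x)` given the sub-σ-algebra `𝒞`. -/
noncomputable def condProb {ℓ m : ℕ} (μ : Measure (Conf ℓ m)) [IsFiniteMeasure μ]
    (𝒞 : MeasurableSpace (Conf ℓ m)) (s : Set (Conf ℓ m)) (x : Conf ℓ m) : ENNReal :=
  @condExpKernel (Conf ℓ m) MeasurableSpace.pi inferInstance μ inferInstance 𝒞 x s

/-- Conditional information `I_μ(ℬ|𝒞)(x) = −log μ^𝒞([x]_ℬ | x)`, where the atom `[x]_ℬ`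
of the sub-σ-algebra `ℬ` is supplied explicitly. -/
noncomputable def condInfo {ℓ m : ℕ} (μ : Measure (Conf ℓ m)) [IsFiniteMeasure μ]
    (𝒞 : MeasurableSpace (Conf ℓ m)) (atomB : Set (Conf ℓ m)) (x : Conf ℓ m) : ℝ :=
  - Real.log ((condProb μ 𝒞 atomB x).toReal)

/-- The information cocycle `J(𝒜_{p,a}, V) = I(𝒜_{p,a}|V⁻¹𝒜_{p,a}) − I(V⁻¹𝒜_{p,a}|𝒜_{p,a})`
for a measure-preserving `V` (the Radon–Nikodym term of the general definition vanishes). -/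
noncomputable def Jcoc {ℓ m : ℕ} (a : Fin ℓ) (μ : Measure (Conf ℓ m)) [IsFiniteMeasure μ]
    (V : Conf ℓ m → Conf ℓ m) (x : Conf ℓ m) : ℝ :=
  condInfo μ (MeasurableSpace.comap V (pastAlg a)) (atomOn (Wa a) x) x
    - condInfo μ (pastAlg a) (V ⁻¹' atomOn (Wa a) (V x)) x

/-- The shift by `g` as a bijection of the configuration space. -/
def shiftEquiv {ℓ m : ℕ} (g : FG ℓ) : Equiv.Perm (Conf ℓ m) where
  toFun := shift g
  invFun := shift g⁻¹
  left_inv x := by funext h; simp [shift, mul_assoc]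
  right_inv x := by funext h; simp [shift, mul_assoc]

/-- A locally finite measure-preserving measurable bijection of `(X_p, μ)`. -/
def IsLocallyFiniteMP {ℓ m : ℕ} (μ : Measure (Conf ℓ m)) (V : Equiv.Perm (Conf ℓ m)) : Prop :=
  Measurable ⇑V ∧ Measurable ⇑V.symm ∧ MeasurePreserving ⇑V μ μ ∧
    ∀ᵐ x ∂μ, {g : FG ℓ | V x g ≠ x g}.Finite

/-- The group `G_p` generated by the shifts together with the locally finite
measure-preserving bijections. -/
def Gp {ℓ m : ℕ} (μ : Measure (Conf ℓ m)) : Subgroup (Equiv.Perm (Conf ℓ m)) :=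
  Subgroup.closure ({V | ∃ g : FG ℓ, V = shiftEquiv g} ∪ {V | IsLocallyFiniteMP μ V})

/-- The cylinder set where the coordinates on `S` are fixed to the values of `η`. -/
def cylOn {ℓ m : ℕ} (S : Set (FG ℓ)) (η : FG ℓ → Fin m) : Set (Conf ℓ m) :=
  {x | ∀ g ∈ S, x g = η g}

/-- `H_C^+`: locally finite m.p. bijections fixing all coordinates in `B(N) ∪ (F_ℓ ∖ W_a)`. -/
def HCplus {ℓ m : ℕ} (μ : Measure (Conf ℓ m)) (a : Fin ℓ) (N : ℕ) :
    Set (Equiv.Perm (Conf ℓ m)) :=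
  {h | IsLocallyFiniteMP μ h ∧ ∀ᵐ x ∂μ, ∀ g ∈ ball ℓ N ∪ (Wa a)ᶜ, h x g = x g}

/-- `H_C^-`: locally finite m.p. bijections fixing all coordinates in `W_a ∪ B(N)`. -/
def HCminus {ℓ m : ℕ} (μ : Measure (Conf ℓ m)) (a : Fin ℓ) (N : ℕ) :
    Set (Equiv.Perm (Conf ℓ m)) :=
  {h | IsLocallyFiniteMP μ h ∧ ∀ᵐ x ∂μ, ∀ g ∈ Wa a ∪ ball ℓ N, h x g = x g}

/-- The normalized measure `μ_C(A) = μ(A)/μ(C)` (real-valued). -/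
noncomputable def relMeas {ℓ m : ℕ} (μ : Measure (Conf ℓ m)) (C A : Set (Conf ℓ m)) : ℝ :=
  (μ A).toReal / (μ C).toReal

/-- The set where `m_φ(x) ≤ M`. -/
def mphiLe {ℓ m n : ℕ} (φ : Conf ℓ m → Conf ℓ n) (a : Fin ℓ) (M : ℕ) : Set (Conf ℓ m) :=
  {x | ∀ g ∈ Wa a, rphi φ (shift g⁻¹ x) ≤ wl g + M}

/-- The set where `a_φ(x) ≤ M`. -/
def aphiLe {ℓ m n : ℕ} (φ : Conf ℓ m → Conf ℓ n) (a : Fin ℓ) (M : ℕ) : Set (Conf ℓ m) :=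
  {x | ∀ g ∉ Wa a, rphi φ (shift g⁻¹ x) ≤ wl g + M}

/-- The set `D = C ∩ {x : m_φ(x) ≤ M, a_φ(x) ≤ M}` for the cylinder `C` over `B(M)`
determined by `η`. -/
def Dset {ℓ m n : ℕ} (φ : Conf ℓ m → Conf ℓ n) (a : Fin ℓ) (M : ℕ) (η : FG ℓ → Fin m) :
    Set (Conf ℓ m) :=
  cylOn (ball ℓ M) η ∩ (mphiLe φ a M ∩ aphiLe φ a M)

/-- The coboundary equation `J(𝒜_{p,a}, V) = J(𝒜_{q,a}, φVφ⁻¹)∘φ + f∘V − f` a.e.,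
for every `V ∈ G_p`. -/
def CocycleEq {ℓ m n : ℕ} (a : Fin ℓ) (μp : Measure (Conf ℓ m)) (μq : Measure (Conf ℓ n))
    [IsFiniteMeasure μp] [IsFiniteMeasure μq] (φ : Conf ℓ m → Conf ℓ n)
    (ψ : Conf ℓ n → Conf ℓ m) (f : Conf ℓ m → ℝ) : Prop :=
  ∀ V ∈ Gp μp, ∀ᵐ x ∂μp,
    Jcoc a μp (⇑V) x = Jcoc a μq (φ ∘ ⇑V ∘ ψ) (φ x) + f (V x) - f x

/-- Tail property: every point obtained from a point of `D ∖ E` by altering coordinates only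
at `a^k` for `−M−n < k < −M` (or only at `a^k` for `M < k < M+n`) lies in `A`. -/
def TailProp {ℓ m : ℕ} (a : Fin ℓ) (M : ℕ) (D E A : Set (Conf ℓ m)) : Prop :=
  ∀ x ∈ D \ E, ∀ n : ℕ, ∀ x' : Conf ℓ m,
    ((∀ g : FG ℓ,
        (¬ ∃ k : ℤ, -(M : ℤ) - (n : ℤ) < k ∧ k < -(M : ℤ) ∧ g = (FreeGroup.of a) ^ k) →
        x' g = x g) ∨
     (∀ g : FG ℓ,
        (¬ ∃ k : ℤ, (M : ℤ) < k ∧ k < (M : ℤ) + (n : ℤ) ∧ g = (FreeGroup.of a) ^ k) →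
        x' g = x g)) →
    x' ∈ A

end Finitary

/-!
Under the Bernoulli measure the coordinates are i.i.d., so the full integral is exactly
`β ^ N` with `β = ∑ P i ^ (1 - t)`, and the integral over `A ∩ a^N A` is at most that.
For the lower bound let `K₊` (resp. `K₋`) be the points all of whose finite modifications
on `{a^k : k > M}` (resp. `{a^k : k < -M}`) stay in `A`; both contain `D ∖ E`, hence have
positive measure. By mixing of the shift along `a^N`, `K₊ ∩ a^N K₋` has measure bounded
below for large `N`. This set lies in `A ∩ a^N A` and does not depend on the coordinates
`a^k`, `M < k < N - M`, so by independence each of them contributes a factor `β` to the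
integral, while the remaining `2M + 1` factors are at least `1` once `t > 0`. Taking `N`-th
roots, both bounds tend to `β`.
-/
open scoped symmDiff Topology

section InfinitePi

variable {ι : Type*} {X : ι → Type*}

lemma prod_coe_sort_apply (T : Finset ι) (f : ∀ i, X i → ℝ) (x : ∀ i, X i) :
    ∏ i : T, f i (x i) = ∏ i ∈ T, f i (x i) :=
  Finset.prod_coe_sort T fun i => f i (x i)

variable [∀ i, MeasurableSpace (X i)] {μ : ∀ i, Measure (X i)} [∀ i, IsProbabilityMeasure (μ i)]

lemma indep_cylinderEvents_infinitePi {S T : Set ι} (hST : Disjoint S T) :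
    Indep (cylinderEvents S) (cylinderEvents T) (Measure.infinitePi μ) := by
  have h := iIndepFun_infinitePi (P := μ) (X := fun _ => id) fun _ => measurable_id
  rw [iIndepFun_iff_iIndep] at h
  exact indep_iSup_of_disjoint (fun i => (measurable_pi_apply i).comap_le) h hST

lemma measurable_finset_restrict_cylinderEvents (T : Finset ι) :
    Measurable[cylinderEvents (T : Set ι)] (T.restrict (π := X)) := by
  rw [@measurable_pi_iff]
  exact fun i => measurable_cylinderEvent_apply i.2

lemma measurable_prod_apply (T : Finset ι) {f : ∀ i, X i → ℝ} (hf : ∀ i, Measurable (f i)) :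
    Measurable fun y : ∀ i : T, X i => ∏ i : T, f i (y i) :=
  Finset.measurable_prod _ fun i _ => (hf i).comp (measurable_pi_apply i)

lemma integral_finset_prod_infinitePi (T : Finset ι) {f : ∀ i, X i → ℝ}
    (hf : ∀ i, Measurable (f i)) :
    ∫ x, ∏ i ∈ T, f i (x i) ∂Measure.infinitePi μ = ∏ i ∈ T, ∫ y, f i y ∂μ i := by
  have h := integral_restrict_infinitePi (μ := μ) (s := T)
    (measurable_prod_apply T hf).aestronglyMeasurable
  rw [integral_fintype_prod_eq_prod (f := fun i : T => f i),
    Finset.prod_coe_sort T fun i => ∫ y, f i y ∂μ i] at h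
  simpa only [Finset.restrict, prod_coe_sort_apply] using h

lemma setIntegral_finset_prod_infinitePi (T : Finset ι) {f : ∀ i, X i → ℝ}
    (hf : ∀ i, Measurable (f i)) {S : Set (∀ i, X i)}
    (hS : MeasurableSet[cylinderEvents (↑T)ᶜ] S) :
    ∫ x in S, ∏ i ∈ T, f i (x i) ∂Measure.infinitePi μ
      = (Measure.infinitePi μ).real S * ∏ i ∈ T, ∫ y, f i y ∂μ i := by
  have hindep : Indep (cylinderEvents (↑T)ᶜ) (MeasurableSpace.comap T.restrict inferInstance)
      (Measure.infinitePi μ) :=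
    indep_of_indep_of_le_right (indep_cylinderEvents_infinitePi disjoint_compl_left)
      (measurable_finset_restrict_cylinderEvents T).comap_le
  have h := hindep.setIntegral_eq_mul cylinderEvents_le_pi (by fun_prop) hS
    (measurable_prod_apply T hf).aestronglyMeasurable
  simp only [Finset.restrict, prod_coe_sort_apply] at h
  rw [h, integral_finset_prod_infinitePi T hf]

end InfinitePi

section CylinderEvents

variable {ι : Type*} {X : ι → Type*} [∀ i, MeasurableSpace (X i)]

lemma MeasurableSet.cylinderEvents_compl_of_dependsOn [∀ i, Nonempty (X i)]
    {S : Set (∀ i, X i)} (hS : MeasurableSet S) {T : Finset ι}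
    (hdep : DependsOn (· ∈ S) (↑T)ᶜ) : MeasurableSet[cylinderEvents (↑T)ᶜ] S := by
  classical
  set fill : (∀ i, X i) → ∀ i, X i :=
    fun x => Function.updateFinset x T fun _ => Classical.arbitrary _
  have hfill : Measurable[cylinderEvents (↑T)ᶜ] fill := by
    rw [@measurable_pi_iff]
    intro i
    by_cases hi : i ∈ T
    · simp only [fill, Function.updateFinset, dif_pos hi]
      exact measurable_const
    · simp only [fill, Function.updateFinset, dif_neg hi]
      exact measurable_cylinderEvent_apply hi
  have hS' : fill ⁻¹' S = S := Set.ext fun x => eq_iff_iff.1 <| hdep fun i hi => by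
    simp only [fill, Function.updateFinset, dif_neg (show i ∉ T from hi)]
  exact hS' ▸ hfill hS

end CylinderEvents

lemma DependsOn.precomp {ι X β : Type*} {f : (ι → X) → β} {s t : Set ι} (hf : DependsOn f s)
    {e : ι → ι} (he : Set.MapsTo e s t) : DependsOn (fun x => f (x ∘ e)) t :=
  fun _ _ hxy => hf fun i hi => hxy (e i) (he hi)

lemma DependsOn.mem_inter {ι X : Type*} {S₁ S₂ : Set (ι → X)} {s : Set ι}
    (h₁ : DependsOn (· ∈ S₁) s) (h₂ : DependsOn (· ∈ S₂) s) : DependsOn (· ∈ S₁ ∩ S₂) s :=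
  fun _ _ hxy => by simp only [Set.mem_inter_iff, h₁ hxy, h₂ hxy]

section Mixing

lemma abs_mul_sub_mul_le {a b c d : ℝ} (hb₀ : 0 ≤ b) (hb₁ : b ≤ 1) (hc₀ : 0 ≤ c) (hc₁ : c ≤ 1) :
    |a * b - c * d| ≤ |a - c| + |b - d| :=
  calc |a * b - c * d| = |(a - c) * b + c * (b - d)| := by ring_nf
    _ ≤ |a - c| * 1 + 1 * |b - d| := by
      refine (abs_add_le _ _).trans ?_
      rw [abs_mul, abs_mul, abs_of_nonneg hb₀, abs_of_nonneg hc₀]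
      gcongr
    _ = |a - c| + |b - d| := by ring

lemma abs_measureReal_inter_preimage_sub_mul_le {Ω : Type*} [MeasurableSpace Ω]
    {μ : Measure Ω} [IsProbabilityMeasure μ] {τ : Ω → Ω} (hτ : MeasurePreserving τ μ μ)
    {K₁ K₂ U₁ U₂ : Set Ω} (hK₁ : MeasurableSet K₁) (hK₂ : MeasurableSet K₂)
    (hU₁ : MeasurableSet U₁) (hU₂ : MeasurableSet U₂) :
    |μ.real (K₁ ∩ τ ⁻¹' K₂) - μ.real K₁ * μ.real K₂|
      ≤ |μ.real (U₁ ∩ τ ⁻¹' U₂) - μ.real U₁ * μ.real U₂|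
        + 2 * (μ.real (K₁ ∆ U₁) + μ.real (K₂ ∆ U₂)) := by
  have hpre : μ.real (τ ⁻¹' (K₂ ∆ U₂)) = μ.real (K₂ ∆ U₂) :=
    hτ.measureReal_preimage (hK₂.symmDiff hU₂).nullMeasurableSet
  have hinter : |μ.real (K₁ ∩ τ ⁻¹' K₂) - μ.real (U₁ ∩ τ ⁻¹' U₂)|
      ≤ μ.real (K₁ ∆ U₁) + μ.real (K₂ ∆ U₂) := by
    refine (abs_measureReal_sub_le_measureReal_symmDiff
      (hK₁.inter (hτ.measurable hK₂)).nullMeasurableSet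
      (hU₁.inter (hτ.measurable hU₂)).nullMeasurableSet).trans ?_
    rw [← hpre]
    refine (measureReal_mono fun x hx => ?_).trans (measureReal_union_le _ _)
    simp only [Set.mem_symmDiff, Set.mem_inter_iff, Set.mem_preimage, Set.mem_union] at hx ⊢
    tauto
  have hprod : |μ.real K₁ * μ.real K₂ - μ.real U₁ * μ.real U₂|
      ≤ μ.real (K₁ ∆ U₁) + μ.real (K₂ ∆ U₂) :=
    (abs_mul_sub_mul_le measureReal_nonneg measureReal_le_one measureReal_nonneg
      measureReal_le_one).trans (add_le_add
        (abs_measureReal_sub_le_measureReal_symmDiff hK₁.nullMeasurableSet hU₁.nullMeasurableSet)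
        (abs_measureReal_sub_le_measureReal_symmDiff hK₂.nullMeasurableSet hU₂.nullMeasurableSet))
  have := abs_sub_le (μ.real (K₁ ∩ τ ⁻¹' K₂)) (μ.real (U₁ ∩ τ ⁻¹' U₂))
    (μ.real K₁ * μ.real K₂)
  have := abs_sub_le (μ.real (U₁ ∩ τ ⁻¹' U₂)) (μ.real U₁ * μ.real U₂) (μ.real K₁ * μ.real K₂)
  rw [abs_sub_comm (μ.real U₁ * μ.real U₂)] at this
  linarith

lemma exists_mem_measurableCylinders_measureReal_symmDiff_lt {ι : Type*} {X : ι → Type*}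
    [∀ i, MeasurableSpace (X i)] {μ : Measure (∀ i, X i)} [IsFiniteMeasure μ] {K : Set (∀ i, X i)}
    (hK : MeasurableSet K) (δ : ℝ) (hδ : 0 < δ) :
    ∃ U ∈ measurableCylinders X, μ.real (K ∆ U) < δ := by
  obtain ⟨U, hU, hUK⟩ := exists_measure_symmDiff_lt_of_generateFrom_isSetRing (μ := μ)
    isSetRing_measurableCylinders
    ⟨{Set.univ}, Set.countable_singleton _, by simpa using univ_mem_measurableCylinders X,
      by simp⟩
    generateFrom_measurableCylinders.symm hK (ENNReal.ofReal_pos.2 hδ)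
  rw [symmDiff_comm] at hUK
  exact ⟨U, hU, ENNReal.toReal_lt_of_lt_ofReal hUK⟩

variable {ι X : Type*} [MeasurableSpace X] {ν : Measure X} [IsProbabilityMeasure ν]

lemma measurePreserving_comp_infinitePi {e : ι → ι} (he : Function.Injective e) :
    MeasurePreserving (fun x : ι → X => x ∘ e)
      (Measure.infinitePi fun _ => ν) (Measure.infinitePi fun _ => ν) :=
  ⟨measurable_pi_lambda _ fun i => measurable_pi_apply (e i),
    Measure.map_infinitePi_infinitePi_of_inj he⟩

lemma exists_finset_measurableSet_cylinderEvents {U : Set (ι → X)}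
    (hU : U ∈ measurableCylinders fun _ : ι => X) :
    ∃ s : Finset ι, MeasurableSet[cylinderEvents ↑s] U := by
  obtain ⟨s, S, hS, rfl⟩ := (mem_measurableCylinders U).1 hU
  exact ⟨s, measurable_finset_restrict_cylinderEvents s hS⟩

lemma measurable_comp_cylinderEvents (e : ι → ι) (s : Set ι) :
    @Measurable _ _ (cylinderEvents (e '' s)) (cylinderEvents s) fun x : ι → X => x ∘ e :=
  measurable_cylinderEvents_iff.2 fun _ hi =>
    measurable_cylinderEvent_apply (Set.mem_image_of_mem e hi)

lemma eventually_measureReal_inter_preimage_comp_eq_mul {α : Type*} {l : Filter α}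
    {e : α → ι → ι} (he : ∀ a, Function.Injective (e a)) (hesc : ∀ i j, ∀ᶠ a in l, e a j ≠ i)
    {U₁ U₂ : Set (ι → X)} (hU₁ : U₁ ∈ measurableCylinders fun _ : ι => X)
    (hU₂ : U₂ ∈ measurableCylinders fun _ : ι => X) :
    ∀ᶠ a in l, (Measure.infinitePi fun _ => ν).real (U₁ ∩ (fun x => x ∘ e a) ⁻¹' U₂)
      = (Measure.infinitePi fun _ => ν).real U₁ * (Measure.infinitePi fun _ => ν).real U₂ := by
  obtain ⟨s₁, hs₁⟩ := exists_finset_measurableSet_cylinderEvents hU₁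
  obtain ⟨s₂, hs₂⟩ := exists_finset_measurableSet_cylinderEvents hU₂
  have hfar : ∀ᶠ a in l, ∀ i ∈ s₁, ∀ j ∈ s₂, e a j ≠ i :=
    (s₁.eventually_all).2 fun i _ => (s₂.eventually_all).2 fun j _ => hesc i j
  filter_upwards [hfar] with a ha
  have hdisj : Disjoint (s₁ : Set ι) (e a '' s₂) :=
    Set.disjoint_left.2 fun i hi ⟨j, hj, hji⟩ => ha i hi j hj hji
  rw [measureReal_def, (Indep_iff _ _ _).1 (indep_cylinderEvents_infinitePi hdisj) _ _ hs₁
      (measurable_comp_cylinderEvents (e a) s₂ hs₂),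
    (measurePreserving_comp_infinitePi (he a)).measure_preimage
      (cylinderEvents_le_pi _ hs₂).nullMeasurableSet,
    ENNReal.toReal_mul, measureReal_def, measureReal_def]

theorem tendsto_measureReal_inter_preimage_comp {α : Type*} {l : Filter α}
    {e : α → ι → ι} (he : ∀ a, Function.Injective (e a)) (hesc : ∀ i j, ∀ᶠ a in l, e a j ≠ i)
    {K₁ K₂ : Set (ι → X)} (hK₁ : MeasurableSet K₁) (hK₂ : MeasurableSet K₂) :
    Tendsto (fun a => (Measure.infinitePi fun _ => ν).real (K₁ ∩ (fun x => x ∘ e a) ⁻¹' K₂)) l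
      (𝓝 ((Measure.infinitePi fun _ => ν).real K₁ * (Measure.infinitePi fun _ => ν).real K₂)) := by
  refine Metric.tendsto_nhds.2 fun ε hε => ?_
  obtain ⟨U₁, hU₁, hKU₁⟩ := exists_mem_measurableCylinders_measureReal_symmDiff_lt
    (μ := Measure.infinitePi fun _ => ν) hK₁ (ε / 5) (by positivity)
  obtain ⟨U₂, hU₂, hKU₂⟩ := exists_mem_measurableCylinders_measureReal_symmDiff_lt
    (μ := Measure.infinitePi fun _ => ν) hK₂ (ε / 5) (by positivity)
  filter_upwards [eventually_measureReal_inter_preimage_comp_eq_mul (ν := ν) he hesc hU₁ hU₂]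
    with a ha
  rw [Real.dist_eq]
  have := abs_measureReal_inter_preimage_sub_mul_le
    (measurePreserving_comp_infinitePi (ν := ν) (he a))
    hK₁ hK₂ (MeasurableSet.of_mem_measurableCylinders hU₁)
    (MeasurableSet.of_mem_measurableCylinders hU₂)
  rw [ha, sub_self, abs_zero] at this
  linarith

end Mixing

section PointCylinders

variable {ι X : Type*}

def pointCylinders (ι X : Type*) : Set (Set (ι → X)) :=
  {C | ∃ (T : Finset ι) (σ : ι → X), C = {x | ∀ i ∈ T, x i = σ i}}

lemma isPiSystem_pointCylinders : IsPiSystem (pointCylinders ι X) := by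
  classical
  rintro _ ⟨T₁, σ₁, rfl⟩ _ ⟨T₂, σ₂, rfl⟩ ⟨x, hx₁, hx₂⟩
  refine ⟨T₁ ∪ T₂, x, Set.ext fun y => ?_⟩
  simp only [Set.mem_inter_iff, Set.mem_ofPred_eq, Finset.mem_union]
  constructor
  · rintro ⟨h₁, h₂⟩ i (hi | hi)
    · exact (h₁ i hi).trans (hx₁ i hi).symm
    · exact (h₂ i hi).trans (hx₂ i hi).symm
  · intro h
    exact ⟨fun i hi => (h i (.inl hi)).trans (hx₁ i hi),
      fun i hi => (h i (.inr hi)).trans (hx₂ i hi)⟩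

lemma generateFrom_pointCylinders [MeasurableSpace X] [MeasurableSingletonClass X]
    [Countable X] : MeasurableSpace.generateFrom (pointCylinders ι X) = MeasurableSpace.pi := by
  refine le_antisymm (MeasurableSpace.generateFrom_le ?_) (iSup_le fun i => ?_)
  · rintro _ ⟨T, σ, rfl⟩
    have : {x : ι → X | ∀ i ∈ T, x i = σ i} = ⋂ i ∈ (T : Set ι), (· i) ⁻¹' {σ i} := by
      ext; simp
    rw [this]
    exact .biInter T.countable_toSet fun i _ => measurable_pi_apply i (measurableSet_singleton _)
  · rintro _ ⟨t, -, rfl⟩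
    have : (· i) ⁻¹' t
        = ⋃ v ∈ t, {x : ι → X | ∀ j ∈ ({i} : Finset ι), x j = Function.const ι v j} := by
      ext; simp
    rw [this]
    exact .biUnion t.to_countable fun v _ => MeasurableSpace.measurableSet_generateFrom ⟨_, _, rfl⟩

end PointCylinders

section Core

variable {ι X : Type*}

def core (T : ℕ → Finset ι) (A : Set (ι → X)) : Set (ι → X) :=
  {x | ∀ n y, (∀ i ∉ T n, y i = x i) → y ∈ A}

lemma core_subset (T : ℕ → Finset ι) (A : Set (ι → X)) : core T A ⊆ A :=
  fun x hx => hx 0 x fun _ _ => rfl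

lemma dependsOn_mem_core {T : ℕ → Finset ι} (hT : Monotone T) (A : Set (ι → X)) (k : ℕ) :
    DependsOn (· ∈ core T A) (↑(T k))ᶜ := by
  have key : ∀ x y : ι → X, (∀ i ∉ T k, x i = y i) → x ∈ core T A → y ∈ core T A :=
    fun x y hxy hx n z hz => hx (max n k) z fun i hi => by
      rw [hz i fun h => hi (hT (le_max_left n k) h),
        hxy i fun h => hi (hT (le_max_right n k) h)]
  exact fun x y hxy => propext ⟨key x y hxy, key y x fun i hi => (hxy i hi).symm⟩

lemma measurableSet_core [MeasurableSpace X] [Countable X] (T : ℕ → Finset ι)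
    {A : Set (ι → X)} (hA : MeasurableSet A) : MeasurableSet (core T A) := by
  classical
  have hcore : core T A = ⋂ n, ⋂ w : T n → X, (Function.updateFinset · (T n) w) ⁻¹' A := by
    ext x
    simp only [Set.mem_iInter, Set.mem_preimage]
    refine ⟨fun hx n w => hx n _ fun i hi => by simp [Function.updateFinset, hi],
      fun hx n y hy => ?_⟩
    convert hx n fun i => y i using 1
    funext i
    by_cases hi : i ∈ T n <;> simp [Function.updateFinset, hi, hy]
  rw [hcore]
  exact .iInter fun n => .iInter fun w => measurable_updateFinset_left hA

end Core

lemma integrable_finset_prod_apply {ι X : Type*} [MeasurableSpace X] [Finite X]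
    [MeasurableSingletonClass X] {μ : Measure (ι → X)} [IsFiniteMeasure μ] (T : Finset ι)
    (f : X → ℝ) : Integrable (fun x => ∏ i ∈ T, f (x i)) μ := by
  have h := (Integrable.of_finite (μ := μ.map T.restrict)
    (f := fun y : T → X => ∏ i : T, f (y i))).comp_measurable (Finset.measurable_restrict T)
  simpa only [Function.comp_def, Finset.restrict, prod_coe_sort_apply T fun _ => f] using h

lemma tendsto_rpow_inv_natCast_of_le_of_le {u : ℕ → ℝ} {β C : ℝ} (hβ : 0 < β) (hC : 0 < C)
    (c : ℕ) (hlow : ∀ᶠ N in atTop, C * β ^ (N - c) ≤ u N) (hup : ∀ᶠ N in atTop, u N ≤ β ^ N) :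
    Tendsto (fun N : ℕ => u N ^ (N : ℝ)⁻¹) atTop (𝓝 β) := by
  have hinv : Tendsto (fun N : ℕ => (N : ℝ)⁻¹) atTop (𝓝 0) :=
    tendsto_inv_atTop_zero.comp tendsto_natCast_atTop_atTop
  have hroot : ∀ N : ℕ, 1 ≤ N → (β ^ N) ^ (N : ℝ)⁻¹ = β := fun N hN => by
    rw [← Real.rpow_natCast, ← Real.rpow_mul hβ.le, mul_inv_cancel₀ (by positivity),
      Real.rpow_one]
  have hlow' : Tendsto (fun N : ℕ => (C * β ^ (N - c)) ^ (N : ℝ)⁻¹) atTop (𝓝 β) := by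
    have h := ((tendsto_const_nhds (x := C / β ^ c)).rpow hinv (.inl (by positivity))).mul_const β
    rw [Real.rpow_zero, one_mul] at h
    refine h.congr' ?_
    filter_upwards [eventually_ge_atTop (max c 1)] with N hN
    have hCβ : C * β ^ (N - c) = C / β ^ c * β ^ N := by
      rw [← pow_sub_mul_pow β (le_of_max_le_left hN)]
      field_simp
    rw [hCβ, Real.mul_rpow (by positivity) (by positivity), hroot N (le_of_max_le_right hN)]
  have hupper : Tendsto (fun N : ℕ => (β ^ N) ^ (N : ℝ)⁻¹) atTop (𝓝 β) :=
    tendsto_const_nhds.congr' <| (eventually_ge_atTop 1).mono fun N hN => (hroot N hN).symm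
  refine tendsto_of_tendsto_of_tendsto_of_le_of_le' hlow' hupper ?_ ?_
  · filter_upwards [hlow] with N hN
    exact Real.rpow_le_rpow (by positivity) hN (by positivity)
  · filter_upwards [hlow, hup] with N hlow hup
    exact Real.rpow_le_rpow ((by positivity : (0 : ℝ) ≤ C * β ^ (N - c)).trans hlow) hup
      (by positivity)

namespace Finitary

section Marginal

variable {m : ℕ} (P : Fin m → ℝ)

noncomputable def marginal : Measure (Fin m) := ∑ i, ENNReal.ofReal (P i) • Measure.dirac i

noncomputable abbrev bernoulliMeasure (ℓ : ℕ) : Measure (Conf ℓ m) :=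
  Measure.infinitePi fun _ => marginal P

lemma marginal_singleton (i : Fin m) : marginal P {i} = ENNReal.ofReal (P i) := by
  classical
  simp [marginal, Measure.dirac_apply', Set.indicator, Finset.sum_ite_eq']

variable {P}

lemma isProbabilityMeasure_marginal (hP : ∀ i, 0 ≤ P i) (hsum : ∑ i, P i = 1) :
    IsProbabilityMeasure (marginal P) := by
  constructor
  simp [marginal, ← ENNReal.ofReal_sum_of_nonneg fun i _ => hP i, hsum]

lemma integral_marginal [IsProbabilityMeasure (marginal P)] (hP : ∀ i, 0 ≤ P i)
    (f : Fin m → ℝ) : ∫ v, f v ∂marginal P = ∑ v, P v * f v := by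
  rw [integral_fintype]
  · simp [Measure.real, marginal_singleton, hP]
  · exact .of_finite

lemma one_le_sum_mul [IsProbabilityMeasure (marginal P)] (hP : ∀ i, 0 ≤ P i)
    {F : Fin m → ℝ} (hF : ∀ v, 1 ≤ F v) : 1 ≤ ∑ v, P v * F v := by
  rw [← integral_marginal hP]
  simpa using integral_mono (μ := marginal P) (integrable_const 1) .of_finite hF

lemma IsBernoulli.eq_bernoulliMeasure {ℓ : ℕ} {μ : Measure (Conf ℓ m)} (hμ : IsBernoulli P μ)
    (hP : ∀ i, 0 ≤ P i) (hsum : ∑ i, P i = 1) : μ = bernoulliMeasure P ℓ := by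
  have := hμ.1
  have := isProbabilityMeasure_marginal hP hsum
  refine ext_of_generate_finite _ generateFrom_pointCylinders.symm isPiSystem_pointCylinders
    ?_ (by simp)
  rintro _ ⟨T, σ, rfl⟩
  have hpi : {x : Conf ℓ m | ∀ g ∈ T, x g = σ g} = (T : Set (FG ℓ)).pi fun g => {σ g} := by
    ext; simp
  rw [← ENNReal.ofReal_toReal (measure_ne_top μ _), hμ.2, hpi,
    Measure.infinitePi_pi (μ := fun _ => marginal P) fun _ _ => measurableSet_singleton _,
    ENNReal.ofReal_prod_of_nonneg fun _ _ => hP _]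
  simp [marginal_singleton]

end Marginal

lemma shift_inv_eq_comp {ℓ m : ℕ} (g : FG ℓ) (x : Conf ℓ m) :
    shift g⁻¹ x = x ∘ (g * ·) := by
  funext h
  simp [shift]

lemma shift_image_eq_preimage {ℓ m : ℕ} (g : FG ℓ) (A : Set (Conf ℓ m)) :
    shift g '' A = (fun x => x ∘ (g * ·)) ⁻¹' A := by
  rw [show shift g '' A = shift g⁻¹ ⁻¹' A from (shiftEquiv g).image_eq_preimage_symm A]
  ext x
  simp [shift_inv_eq_comp]

section Axis

variable {ℓ m : ℕ} (a : Fin ℓ)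

lemma injective_pow_of : Function.Injective fun n : ℕ => (FreeGroup.of a : FG ℓ) ^ n :=
  IsMulTorsionFree.pow_right_injective (FreeGroup.of_ne_one a)

lemma injective_zpow_of : Function.Injective fun k : ℤ => (FreeGroup.of a : FG ℓ) ^ k :=
  injective_zpow_iff_not_isOfFinOrder.2 <| injective_pow_iff_not_isOfFinOrder.1 <|
    injective_pow_of a

lemma eventually_pow_of_mul_ne (g h : FG ℓ) :
    ∀ᶠ N in atTop, (FreeGroup.of a : FG ℓ) ^ N * h ≠ g := by
  have := (injective_pow_of a).tendsto_cofinite.eventually (eventually_cofinite_ne (g * h⁻¹))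
  rw [Nat.cofinite_eq_atTop] at this
  exact this.mono fun N hN hEq => hN (eq_mul_inv_of_mul_eq hEq)

noncomputable def axisWindow (lo hi : ℤ) : Finset (FG ℓ) :=
  (Finset.Ioo lo hi).image fun k => FreeGroup.of a ^ k

lemma mem_axisWindow {lo hi : ℤ} {g : FG ℓ} :
    g ∈ axisWindow a lo hi ↔ ∃ k, lo < k ∧ k < hi ∧ g = FreeGroup.of a ^ k := by
  simp [axisWindow, eq_comm, and_assoc]

lemma card_axisWindow (lo hi : ℤ) : (axisWindow a lo hi).card = (hi - lo - 1).toNat := by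
  rw [axisWindow, Finset.card_image_of_injective _ (injective_zpow_of a), Int.card_Ioo]

lemma axisWindow_mono {lo lo' hi hi' : ℤ} (hlo : lo' ≤ lo) (hhi : hi ≤ hi') :
    axisWindow a lo hi ⊆ axisWindow a lo' hi' :=
  Finset.image_subset_image (Finset.Ioo_subset_Ioo hlo hhi)

lemma monotone_axisWindow_right (M : ℕ) : Monotone fun n : ℕ => axisWindow a M (M + n) :=
  fun _ _ h => axisWindow_mono a le_rfl (by omega)

lemma monotone_axisWindow_left (M : ℕ) : Monotone fun n : ℕ => axisWindow a (-M - n) (-M) :=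
  fun _ _ h => axisWindow_mono a (by omega) le_rfl

lemma axisWindow_subset_image_range {lo hi : ℤ} {N : ℕ} (hlo : 0 ≤ lo) (hhi : hi ≤ N) :
    axisWindow a lo hi ⊆ (Finset.range N).image fun i => FreeGroup.of a ^ i := by
  intro g hg
  obtain ⟨k, hlok, hkhi, rfl⟩ := (mem_axisWindow a).1 hg
  refine Finset.mem_image.2 ⟨k.toNat, Finset.mem_range.2 (by omega), ?_⟩
  rw [← zpow_natCast, Int.toNat_of_nonneg (by omega)]

lemma mapsTo_mul_pow_of_compl_axisWindow (M N : ℕ) (hN : 2 * M ≤ N) :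
    Set.MapsTo (FreeGroup.of a ^ N * ·) (↑(axisWindow a (-M - ↑(N - 2 * M)) (-M)))ᶜ
      (↑(axisWindow a M (N - M)))ᶜ := by
  intro h hh hW
  refine hh ?_
  obtain ⟨j, hMj, hjN, hj⟩ := (mem_axisWindow a).1 hW
  refine (mem_axisWindow a).2
    ⟨j - N, by omega, by omega, mul_left_cancel (a := FreeGroup.of a ^ N) ?_⟩
  rw [show FreeGroup.of a ^ N * h = FreeGroup.of a ^ j from hj, ← zpow_natCast, ← zpow_add,
    add_sub_cancel]

lemma TailProp.diff_subset_core_right {M : ℕ} {D E A : Set (Conf ℓ m)}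
    (h : TailProp a M D E A) : D \ E ⊆ core (fun n => axisWindow a M (M + n)) A :=
  fun x hx n y hy => h x hx n y (.inr fun g hg => hy g fun hgW => hg ((mem_axisWindow a).1 hgW))

lemma TailProp.diff_subset_core_left {M : ℕ} {D E A : Set (Conf ℓ m)}
    (h : TailProp a M D E A) : D \ E ⊆ core (fun n => axisWindow a (-M - n) (-M)) A :=
  fun x hx n y hy => h x hx n y (.inl fun g hg => hy g fun hgW => hg ((mem_axisWindow a).1 hgW))

lemma prod_range_eq_prod_image_pow_of (N : ℕ) (F : Fin m → ℝ) (x : Conf ℓ m) :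
    ∏ i ∈ Finset.range N, F (x (FreeGroup.of a ^ i))
      = ∏ g ∈ (Finset.range N).image (FreeGroup.of a ^ ·), F (x g) :=
  (Finset.prod_image (f := fun g => F (x g)) fun _ _ _ _ h => injective_pow_of a h).symm

end Axis

section BernoulliShift

variable {ℓ m : ℕ} {P : Fin m → ℝ} [IsProbabilityMeasure (marginal P)] {F : Fin m → ℝ}
  (a : Fin ℓ)

lemma integral_prod_range_pow_of (hP : ∀ i, 0 ≤ P i) (N : ℕ) :
    ∫ x, ∏ i ∈ Finset.range N, F (x (FreeGroup.of a ^ i)) ∂bernoulliMeasure P ℓ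
      = (∑ v, P v * F v) ^ N := by
  simp_rw [prod_range_eq_prod_image_pow_of a N F]
  rw [integral_finset_prod_infinitePi _ fun _ => measurable_of_finite F, Finset.prod_const,
    Finset.card_image_of_injective _ (injective_pow_of a), Finset.card_range,
    integral_marginal hP]

lemma setIntegral_prod_range_pow_of_le (hP : ∀ i, 0 ≤ P i) (hF : ∀ v, 0 ≤ F v)
    (S : Set (Conf ℓ m)) (N : ℕ) :
    ∫ x in S, ∏ i ∈ Finset.range N, F (x (FreeGroup.of a ^ i)) ∂bernoulliMeasure P ℓ
      ≤ (∑ v, P v * F v) ^ N := by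
  refine (setIntegral_le_integral ?_ (.of_forall fun x => Finset.prod_nonneg fun _ _ => hF _))
    |>.trans_eq (integral_prod_range_pow_of a hP N)
  simp_rw [prod_range_eq_prod_image_pow_of a N F]
  exact integrable_finset_prod_apply _ F

lemma eventually_le_measureReal_inter_preimage_mul_pow_of {K₁ K₂ : Set (Conf ℓ m)}
    (hK₁ : MeasurableSet K₁) (hK₂ : MeasurableSet K₂) {c : ℝ}
    (hc : c < (bernoulliMeasure P ℓ).real K₁ * (bernoulliMeasure P ℓ).real K₂) :
    ∀ᶠ N in atTop, c ≤ (bernoulliMeasure P ℓ).real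
      (K₁ ∩ (fun x => x ∘ (FreeGroup.of a ^ N * ·)) ⁻¹' K₂) :=
  (tendsto_measureReal_inter_preimage_comp (e := fun N : ℕ => (FreeGroup.of a ^ N * ·))
    (fun _ => mul_right_injective _) (fun g h => eventually_pow_of_mul_ne a g h) hK₁ hK₂
    ).eventually_const_le hc

lemma mul_pow_le_setIntegral_inter_shift (hP : ∀ i, 0 ≤ P i) (hF : ∀ v, 1 ≤ F v)
    {A : Set (Conf ℓ m)} (hA : MeasurableSet A) (M : ℕ) {N : ℕ} (hN : 2 * M + 1 ≤ N) :
    (bernoulliMeasure P ℓ).real (core (fun n => axisWindow a M (M + n)) A ∩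
        (fun x => x ∘ (FreeGroup.of a ^ N * ·)) ⁻¹' core (fun n => axisWindow a (-M - n) (-M)) A)
        * (∑ v, P v * F v) ^ (N - (2 * M + 1))
      ≤ ∫ x in A ∩ shift (FreeGroup.of a ^ N) '' A,
          ∏ i ∈ Finset.range N, F (x (FreeGroup.of a ^ i)) ∂bernoulliMeasure P ℓ := by
  classical
  have := nonempty_of_isProbabilityMeasure (marginal P)
  set μ := bernoulliMeasure P ℓ
  set τ : Conf ℓ m → Conf ℓ m := fun x => x ∘ (FreeGroup.of a ^ N * ·)
  set K₁ := core (fun n => axisWindow a M (M + n)) A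
  set K₂ := core (fun n => axisWindow a (-M - n) (-M)) A
  set W := axisWindow a M (N - M)
  have hτ : MeasurePreserving τ μ μ := measurePreserving_comp_infinitePi (mul_right_injective _)
  have hS : MeasurableSet (K₁ ∩ τ ⁻¹' K₂) :=
    (measurableSet_core _ hA).inter (hτ.measurable (measurableSet_core _ hA))
  have hK₁ : DependsOn (· ∈ K₁) (↑W)ᶜ :=
    DependsOn.mono (Set.compl_subset_compl.2 (axisWindow_mono a le_rfl (by omega)))
      (dependsOn_mem_core (monotone_axisWindow_right a M) A (N - 2 * M))
  have hK₂ : DependsOn (· ∈ τ ⁻¹' K₂) (↑W)ᶜ :=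
    DependsOn.precomp (dependsOn_mem_core (monotone_axisWindow_left a M) A (N - 2 * M))
      (mapsTo_mul_pow_of_compl_axisWindow a M N (by omega))
  have hSA : K₁ ∩ τ ⁻¹' K₂ ⊆ A ∩ shift (FreeGroup.of a ^ N) '' A := by
    rw [shift_image_eq_preimage]
    exact Set.inter_subset_inter (core_subset _ _) (Set.preimage_mono (core_subset _ _))
  have hint : ∀ T : Finset (FG ℓ), Integrable (fun x => ∏ g ∈ T, F (x g)) μ :=
    fun T => integrable_finset_prod_apply T F
  calc μ.real (K₁ ∩ τ ⁻¹' K₂) * (∑ v, P v * F v) ^ (N - (2 * M + 1))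
      = μ.real (K₁ ∩ τ ⁻¹' K₂) * ∏ _g ∈ W, ∫ v, F v ∂marginal P := by
        rw [Finset.prod_const, card_axisWindow, integral_marginal hP]
        congr 2
        omega
    _ = ∫ x in K₁ ∩ τ ⁻¹' K₂, ∏ g ∈ W, F (x g) ∂μ :=
        (setIntegral_finset_prod_infinitePi W (fun _ => measurable_of_finite F)
          (hS.cylinderEvents_compl_of_dependsOn (hK₁.mem_inter hK₂))).symm
    _ ≤ ∫ x in K₁ ∩ τ ⁻¹' K₂, ∏ i ∈ Finset.range N, F (x (FreeGroup.of a ^ i)) ∂μ := by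
        simp_rw [prod_range_eq_prod_image_pow_of a N F]
        refine setIntegral_mono_on (hint _).integrableOn (hint _).integrableOn hS fun x _ => ?_
        exact Finset.prod_le_prod_of_subset_of_one_le
          (axisWindow_subset_image_range a (by omega) (by omega))
          (fun _ _ => zero_le_one.trans (hF _)) fun _ _ _ => hF _
    _ ≤ _ := by
        simp_rw [prod_range_eq_prod_image_pow_of a N F]
        exact setIntegral_mono_set (hint _).integrableOn
          (.of_forall fun x => Finset.prod_nonneg fun _ _ => zero_le_one.trans (hF _))
          hSA.eventuallyLE

lemma tendsto_integral_prod_rpow_inv (hP : ∀ i, 0 ≤ P i) (hF : ∀ v, 1 ≤ F v) :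
    Tendsto (fun N : ℕ => (∫ x, ∏ i ∈ Finset.range N, F (x (FreeGroup.of a ^ i))
        ∂bernoulliMeasure P ℓ) ^ (N : ℝ)⁻¹) atTop (𝓝 (∑ v, P v * F v)) := by
  simp_rw [integral_prod_range_pow_of a hP]
  exact tendsto_rpow_inv_natCast_of_le_of_le (one_pos.trans_le (one_le_sum_mul hP hF)) one_pos 0
    (.of_forall fun N => by simp) (.of_forall fun N => le_rfl)

lemma tendsto_setIntegral_inter_shift_rpow_inv (hP : ∀ i, 0 ≤ P i) (hF : ∀ v, 1 ≤ F v)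
    {A : Set (Conf ℓ m)} (hA : MeasurableSet A) (M : ℕ)
    (hcore : 0 < (bernoulliMeasure P ℓ).real (core (fun n => axisWindow a M (M + n)) A)
      * (bernoulliMeasure P ℓ).real (core (fun n => axisWindow a (-M - n) (-M)) A)) :
    Tendsto (fun N : ℕ => (∫ x in A ∩ shift (FreeGroup.of a ^ N) '' A,
        ∏ i ∈ Finset.range N, F (x (FreeGroup.of a ^ i)) ∂bernoulliMeasure P ℓ) ^ (N : ℝ)⁻¹)
      atTop (𝓝 (∑ v, P v * F v)) := by
  have hβ := one_pos.trans_le (one_le_sum_mul hP hF)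
  refine tendsto_rpow_inv_natCast_of_le_of_le hβ (half_pos hcore) (2 * M + 1) ?_
    (.of_forall fun N => setIntegral_prod_range_pow_of_le a hP
      (fun v => zero_le_one.trans (hF v)) _ N)
  filter_upwards [eventually_le_measureReal_inter_preimage_mul_pow_of a
    (measurableSet_core _ hA) (measurableSet_core _ hA) (half_lt_self hcore),
    eventually_ge_atTop (2 * M + 1)] with N hmix hN
  exact (mul_le_mul_of_nonneg_right hmix (pow_nonneg hβ.le _)).trans
    (mul_pow_le_setIntegral_inter_shift a hP hF hA M hN)

end BernoulliShift

theorem beta_limsup_on_tail_set_general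
    {ℓ m n : ℕ} (a : Fin ℓ) (P : Fin m → ℝ)
    (hP : ∀ i, 0 < P i)
    (hPsum : ∑ i, P i = 1)
    (μp : Measure (Conf ℓ m))
    (hμp : IsBernoulli P μp)
    (φ : Conf ℓ m → Conf ℓ n)
    (M : ℕ) (η : FG ℓ → Fin m) (hD : 0 < μp (Dset φ a M η))
    (A : Set (Conf ℓ m)) (hA : MeasurableSet A)
    (hTail : ∃ E ⊆ Dset φ a M η, μp E = 0 ∧ TailProp a M (Dset φ a M η) E A) :
    ∃ t₀ : ℝ, 0 < t₀ ∧ ∀ t : ℝ, t₀ < t →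
      limsup
        (fun N : ℕ =>
          (∫ x in A ∩ (shift ((FreeGroup.of a) ^ N) '' A),
              ∏ i ∈ Finset.range N, (P (x ((FreeGroup.of a) ^ i))) ^ (-t) ∂μp)
            ^ ((N : ℝ)⁻¹))
        atTop = ∑ i, P i ^ (1 - t) ∧
      Tendsto
        (fun N : ℕ =>
          (∫ x, ∏ i ∈ Finset.range N, (P (x ((FreeGroup.of a) ^ i))) ^ (-t) ∂μp)
            ^ ((N : ℝ)⁻¹))
        atTop (nhds (∑ i, P i ^ (1 - t))) := by
  obtain ⟨E, -, hE, hTailE⟩ := hTail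
  have hP0 : ∀ i, 0 ≤ P i := fun i => (hP i).le
  have := isProbabilityMeasure_marginal hP0 hPsum
  obtain rfl := hμp.eq_bernoulliMeasure hP0 hPsum
  have hpos : ∀ {K}, Dset φ a M η \ E ⊆ K → 0 < (bernoulliMeasure P ℓ).real K :=
    fun hK => ENNReal.toReal_pos ((measure_sdiff_null hE ▸ hD).trans_le (measure_mono hK)).ne'
      (measure_ne_top _ _)
  refine ⟨1, one_pos, fun t ht => ?_⟩
  have hF : ∀ v, 1 ≤ P v ^ (-t) := fun v => Real.one_le_rpow_of_pos_of_le_one_of_nonpos (hP v)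
    (hPsum ▸ Finset.single_le_sum (fun j _ => hP0 j) (Finset.mem_univ v)) (by linarith)
  have hβ : ∑ v, P v * P v ^ (-t) = ∑ i, P i ^ (1 - t) := Finset.sum_congr rfl fun v _ => by
    rw [sub_eq_neg_add, Real.rpow_add (hP v), Real.rpow_one, mul_comm]
  rw [← hβ]
  exact ⟨(tendsto_setIntegral_inter_shift_rpow_inv a hP0 hF hA M (mul_pos
      (hpos (hTailE.diff_subset_core_right a)) (hpos (hTailE.diff_subset_core_left a)))).limsup_eq,
    tendsto_integral_prod_rpow_inv a hP0 hF⟩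

theorem beta_limsup_on_tail_set
    {ℓ m n : ℕ} (hℓ : 1 ≤ ℓ) (a : Fin ℓ) (P : Fin m → ℝ) (Q : Fin n → ℝ)
    (hP : ∀ i, 0 < P i) (hQ : ∀ j, 0 < Q j)
    (hPsum : ∑ i, P i = 1) (hQsum : ∑ j, Q j = 1)
    (μp : Measure (Conf ℓ m)) (μq : Measure (Conf ℓ n))
    (hμp : IsBernoulli P μp) (hμq : IsBernoulli Q μq)
    (φ : Conf ℓ m → Conf ℓ n) (ψ : Conf ℓ n → Conf ℓ m)
    (hiso : IsFinitaryIso μp μq φ ψ) (hexp : FiniteExpectation μp μq φ ψ)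
    (M : ℕ) (η : FG ℓ → Fin m) (hD : 0 < μp (Dset φ a M η))
    (A : Set (Conf ℓ m)) (hA : MeasurableSet A)
    (hTail : ∃ E ⊆ Dset φ a M η, μp E = 0 ∧ TailProp a M (Dset φ a M η) E A) :
    ∃ t₀ : ℝ, 0 < t₀ ∧ ∀ t : ℝ, t₀ < t →
      limsup
        (fun N : ℕ =>
          (∫ x in A ∩ (shift ((FreeGroup.of a) ^ N) '' A),
              ∏ i ∈ Finset.range N, (P (x ((FreeGroup.of a) ^ i))) ^ (-t) ∂μp)
            ^ ((N : ℝ)⁻¹))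
        atTop = ∑ i, P i ^ (1 - t) ∧
      Tendsto
        (fun N : ℕ =>
          (∫ x, ∏ i ∈ Finset.range N, (P (x ((FreeGroup.of a) ^ i))) ^ (-t) ∂μp)
            ^ ((N : ℝ)⁻¹))
        atTop (nhds (∑ i, P i ^ (1 - t))) :=
  beta_limsup_on_tail_set_general a P hP hPsum μp hμp φ M η hD A hA hTail

end Finitary
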